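/- arXiv:1207.7350 — 2 statements merged into one kernel-verified Lean document; each statement's English description precedes it below -/
import Mathlib

section
/- Let H = (1/2)(p_x^2 + p_y^2) - ω(x^2 + y^2) + α/x^2 + β/y^2. Then the function F₂ = (x p_y - y p_x)² + 2α y²/x² + 2β x²/y² Poisson-commutes with H: {H, F₂} = 0. -/
/-- The Smorodinsky–Winternitz Hamiltonian Poisson-commutes with
`F₂ = (x p_y - y p_x)² + 2α y²/x² + 2β x²/y²`. -/
theorem sw_poisson_commutes_F2 (ω α β : ℝ) :
    let H : ℝ → ℝ → ℝ → ℝ → ℝ := fun x y px py =>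
      (1/2)*(px^2 + py^2) - ω*(x^2 + y^2) + α/x^2 + β/y^2
    let F₂ : ℝ → ℝ → ℝ → ℝ → ℝ := fun x y px py =>
      (x*py - y*px)^2 + 2*α*y^2/x^2 + 2*β*x^2/y^2
    ∀ x y px py : ℝ, x ≠ 0 → y ≠ 0 →
      deriv (fun t => H t y px py) x * deriv (fun t => F₂ x y t py) px
      + deriv (fun t => H x t px py) y * deriv (fun t => F₂ x y px t) py
      - deriv (fun t => H x y t py) px * deriv (fun t => F₂ t y px py) x
      - deriv (fun t => H x y px t) py * deriv (fun t => F₂ x t px py) y = 0 := by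
  intro H F₂ x y px py hx hy
  have hx2 : (x:ℝ)^2 ≠ 0 := pow_ne_zero 2 hx
  have hy2 : (y:ℝ)^2 ≠ 0 := pow_ne_zero 2 hy
  have h1 : deriv (fun t => H t y px py) x = -ω*(2*x) + (-(α*(2*x)))/(x^2)^2 := by
    have : HasDerivAt (fun t : ℝ => H t y px py)
        (0 - ω*(2*x^1 + 0) + (0*x^2 - α*(2*x^1))/(x^2)^2 + 0) x := by
      exact ((((hasDerivAt_const x ((1/2)*(px^2+py^2))).sub
        (((hasDerivAt_pow 2 x).add (hasDerivAt_const x (y^2))).const_mul ω)).add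
        ((hasDerivAt_const x α).div (hasDerivAt_pow 2 x) hx2)).add
        (hasDerivAt_const x (β/y^2)))
    rw [this.deriv]; ring
  have h2 : deriv (fun t => H x t px py) y = -ω*(2*y) + (-(β*(2*y)))/(y^2)^2 := by
    have : HasDerivAt (fun t : ℝ => H x t px py)
        (0 - ω*(0 + 2*y^1) + 0 + (0*y^2 - β*(2*y^1))/(y^2)^2) y := by
      exact ((((hasDerivAt_const y ((1/2)*(px^2+py^2))).sub
        (((hasDerivAt_const y (x^2)).add (hasDerivAt_pow 2 y)).const_mul ω)).add
        (hasDerivAt_const y (α/x^2))).add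
        ((hasDerivAt_const y β).div (hasDerivAt_pow 2 y) hy2))
    rw [this.deriv]; ring
  have h3 : deriv (fun t => H x y t py) px = px := by
    have : HasDerivAt (fun t : ℝ => H x y t py) ((1/2)*(2*px^1 + 0) - 0 + 0 + 0) px := by
      exact (((((hasDerivAt_pow 2 px).add (hasDerivAt_const px (py^2))).const_mul
        (1/2)).sub (hasDerivAt_const px (ω*(x^2+y^2)))).add
        (hasDerivAt_const px (α/x^2))).add (hasDerivAt_const px (β/y^2))
    rw [this.deriv]; ring
  have h4 : deriv (fun t => H x y px t) py = py := by
    have : HasDerivAt (fun t : ℝ => H x y px t) ((1/2)*(0 + 2*py^1) - 0 + 0 + 0) py := by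
      exact (((((hasDerivAt_const py (px^2)).add (hasDerivAt_pow 2 py)).const_mul
        (1/2)).sub (hasDerivAt_const py (ω*(x^2+y^2)))).add
        (hasDerivAt_const py (α/x^2))).add (hasDerivAt_const py (β/y^2))
    rw [this.deriv]; ring
  have g1 : deriv (fun t => F₂ t y px py) x =
      2*(x*py - y*px)*py + (0*x^2 - 2*α*y^2*(2*x))/(x^2)^2 + 2*β*(2*x)/y^2 := by
    have : HasDerivAt (fun t : ℝ => F₂ t y px py)
        ((2:ℕ)*(x*py - y*px)^(2-1)*(1*py - 0) +
          (0*x^2 - (2*α*y^2)*(2*x^1))/(x^2)^2 +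
          (2*β*(2*x^1)*y^2 - 2*β*x^2*0)/(y^2)^2) x := by
      exact (((((hasDerivAt_id x).mul_const py).sub
          ((hasDerivAt_const x (y*px)))).pow 2).add
        ((hasDerivAt_const x (2*α*y^2)).div (hasDerivAt_pow 2 x) hx2)).add
        (((hasDerivAt_pow 2 x).const_mul (2*β)).div (hasDerivAt_const x (y^2)) hy2)
    rw [this.deriv]; field_simp; ring
  have g2 : deriv (fun t => F₂ x t px py) y =
      2*(x*py - y*px)*(-px) + 2*α*(2*y)/x^2 + (0*y^2 - 2*β*x^2*(2*y))/(y^2)^2 := by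
    have : HasDerivAt (fun t : ℝ => F₂ x t px py)
        ((2:ℕ)*(x*py - y*px)^(2-1)*(0 - 1*px) +
          (2*α*(2*y^1)*x^2 - 2*α*y^2*0)/(x^2)^2 +
          (0*y^2 - (2*β*x^2)*(2*y^1))/(y^2)^2) y := by
      exact ((((hasDerivAt_const y (x*py)).sub
          ((hasDerivAt_id y).mul_const px)).pow 2).add
        (((hasDerivAt_pow 2 y).const_mul (2*α)).div (hasDerivAt_const y (x^2)) hx2)).add
        ((hasDerivAt_const y (2*β*x^2)).div (hasDerivAt_pow 2 y) hy2)
    rw [this.deriv]; field_simp; ring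
  have g3 : deriv (fun t => F₂ x y t py) px = 2*(x*py - y*px)*(-y) := by
    have : HasDerivAt (fun t : ℝ => F₂ x y t py)
        ((2:ℕ)*(x*py - y*px)^(2-1)*(0 - y*1) + 0 + 0) px := by
      exact ((((hasDerivAt_const px (x*py)).sub
          ((hasDerivAt_id px).const_mul y)).pow 2).add
        (hasDerivAt_const px (2*α*y^2/x^2))).add (hasDerivAt_const px (2*β*x^2/y^2))
    rw [this.deriv]; ring
  have g4 : deriv (fun t => F₂ x y px t) py = 2*(x*py - y*px)*x := by
    have : HasDerivAt (fun t : ℝ => F₂ x y px t)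
        ((2:ℕ)*(x*py - y*px)^(2-1)*(x*1 - 0) + 0 + 0) py := by
      exact (((((hasDerivAt_id py).const_mul x).sub
          (hasDerivAt_const py (y*px))).pow 2).add
        (hasDerivAt_const py (2*α*y^2/x^2))).add (hasDerivAt_const py (2*β*x^2/y^2))
    rw [this.deriv]; ring
  rw [h1, h2, h3, h4, g1, g2, g3, g4]
  field_simp
  ring
end

section
/- Let a, b ∈ ℝ and let K be the Killing tensor with components K^{11} = (y-b)², K^{12} = K^{21} = -(x-a)(y-b), K^{22} = (x-a)². If the Bertrand–Darboux compatibility condition d(K̂ dV) = 0 holds for the Smorodinsky–Winternitz potential V = -ω(x²+y²) + α/x² + β/y² on an open set where x ≠ 0 and y ≠ 0, then ω²(b x - a y) + a(b - y)α/x⁴ + b(x - a)β/y⁴ = 0 holds identically on that set. -/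
/-!
For this Killing tensor and potential, the Bertrand–Darboux condition at `(x, y)` reads
`6 F(x, y) = 0` with `F = ω(bx - ay) + a(b - y)α/x⁴ + b(x - a)β/y⁴`. For fixed `y`, `F` is an
affine function of `x` plus `a(b - y)α/x⁴`; multiplied by `x⁴` it becomes a polynomial whose
constant term is `a(b - y)α`, and it vanishes on a whole interval of `x`, so `a(b - y)α = 0`.
Symmetrically `b(x - a)β = 0`, hence `ω(bx - ay) = 0` and every term of the claim vanishes.
-/

open Filter Topology Polynomial

lemma eq_zero_of_eventually_add_mul_add_div_pow_eq_zero {𝕜 : Type*} [NontriviallyNormedField 𝕜]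
    {p q c x : 𝕜} {n : ℕ} (hn : n ≠ 0) (h : ∀ᶠ t in 𝓝 x, p + q * t + c / t ^ n = 0) : c = 0 := by
  set P : 𝕜[X] := C p * X ^ n + C q * X ^ (n + 1) + C c
  have hroots : {t | p + q * t + c / t ^ n = 0} \ {0} ⊆ {t | P.IsRoot t} := by
    rintro t ⟨ht : p + q * t + c / t ^ n = 0, ht0 : t ≠ 0⟩
    simp only [Set.mem_ofPred_eq, IsRoot.def, P, eval_add, eval_mul, eval_C, eval_pow, eval_X]
    field_simp at ht
    linear_combination ht
  have hP : P = 0 := eq_zero_of_infinite_isRoot P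
    (((infinite_of_mem_nhds x h).sdiff (Set.finite_singleton 0)).mono hroots)
  simpa [P, coeff_X_pow, hn.symm] using congrArg (coeff · 0) hP

lemma eventually_mk_mem_of_mem_nhds {S T : Type*} [TopologicalSpace S] [TopologicalSpace T]
    {U : Set (S × T)} {p : S × T} (hU : U ∈ 𝓝 p) :
    (∀ᶠ t in 𝓝 p.1, (t, p.2) ∈ U) ∧ ∀ᶠ t in 𝓝 p.2, (p.1, t) ∈ U :=
  ⟨(continuous_id.prodMk continuous_const).continuousAt.preimage_mem_nhds hU,
    (continuous_const.prodMk continuous_id).continuousAt.preimage_mem_nhds hU⟩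

lemma hasDerivAt_const_div_pow {𝕜 : Type*} [NontriviallyNormedField 𝕜] (c : 𝕜) (n : ℕ) {x : 𝕜}
    (hx : x ≠ 0) :
    HasDerivAt (fun t => c / t ^ n) (-(n * c) / x ^ (n + 1)) x := by
  refine ((hasDerivAt_const x c).div (hasDerivAt_pow n x) (pow_ne_zero n hx)).congr_deriv ?_
  rcases n with _ | n
  · simp
  · field_simp
    push_cast
    ring

lemma hasDerivAt_mul_sub_div_cube (k c : ℝ) {x : ℝ} (hx : x ≠ 0) :
    HasDerivAt (fun t => -2 * k * t - 2 * c / t ^ 3) (-2 * k + 6 * c / x ^ 4) x := by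
  have h := ((hasDerivAt_id x).const_mul (-2 * k)).sub (hasDerivAt_const_div_pow (2 * c) 3 hx)
  simp only [id, mul_one] at h
  exact h.congr_deriv (by push_cast; ring)

noncomputable def swPotential (ω α β x y : ℝ) : ℝ := -ω * (x ^ 2 + y ^ 2) + α / x ^ 2 + β / y ^ 2

section BertrandDarboux

variable (ω α β : ℝ)

lemma deriv_swPotential_fst (y : ℝ) {x : ℝ} (hx : x ≠ 0) :
    deriv (fun t => swPotential ω α β t y) x = -2 * ω * x - 2 * α / x ^ 3 := by
  refine HasDerivAt.deriv ?_
  refine ((((hasDerivAt_pow 2 x).add_const (y ^ 2)).const_mul (-ω)).add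
    (hasDerivAt_const_div_pow α 2 hx)).add_const (β / y ^ 2) |>.congr_deriv ?_
  push_cast
  ring

lemma deriv_swPotential_snd (x : ℝ) {y : ℝ} (hy : y ≠ 0) :
    deriv (fun t => swPotential ω α β x t) y = -2 * ω * y - 2 * β / y ^ 3 := by
  refine HasDerivAt.deriv ?_
  refine ((((hasDerivAt_pow 2 y).const_add (x ^ 2)).const_mul (-ω)).add_const (α / x ^ 2)).add
    (hasDerivAt_const_div_pow β 2 hy) |>.congr_deriv ?_
  push_cast
  ring

variable (a b : ℝ) {x y : ℝ}

lemma deriv_bertrandDarboux_fst (hx : x ≠ 0) (hy : y ≠ 0) :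
    deriv (fun t => (t - b) ^ 2 * deriv (fun s => swPotential ω α β s t) x
        - (x - a) * (t - b) * deriv (fun s => swPotential ω α β x s) t) y
      = 2 * (y - b) * (-2 * ω * x - 2 * α / x ^ 3)
        - (x - a) * ((-2 * ω * y - 2 * β / y ^ 3) + (y - b) * (-2 * ω + 6 * β / y ^ 4)) := by
  have hev : (fun t => (t - b) ^ 2 * deriv (fun s => swPotential ω α β s t) x
        - (x - a) * (t - b) * deriv (fun s => swPotential ω α β x s) t)
      =ᶠ[𝓝 y] fun t => (t - b) ^ 2 * (-2 * ω * x - 2 * α / x ^ 3)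
        - (x - a) * ((t - b) * (-2 * ω * t - 2 * β / t ^ 3)) := by
    filter_upwards [eventually_ne_nhds hy] with t ht
    rw [deriv_swPotential_fst ω α β t hx, deriv_swPotential_snd ω α β x ht]
    ring
  rw [hev.deriv_eq]
  refine HasDerivAt.deriv ?_
  refine ((((hasDerivAt_id y).sub_const b).pow 2).mul_const _).sub
    ((((hasDerivAt_id y).sub_const b).mul (hasDerivAt_mul_sub_div_cube ω β hy)).const_mul _)
    |>.congr_deriv ?_
  simp only [id]
  ring

lemma deriv_bertrandDarboux_snd (hx : x ≠ 0) (hy : y ≠ 0) :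
    deriv (fun t => -((t - a) * (y - b)) * deriv (fun s => swPotential ω α β s y) t
        + (t - a) ^ 2 * deriv (fun s => swPotential ω α β t s) y) x
      = -((y - b) * ((-2 * ω * x - 2 * α / x ^ 3) + (x - a) * (-2 * ω + 6 * α / x ^ 4)))
        + 2 * (x - a) * (-2 * ω * y - 2 * β / y ^ 3) := by
  have hev : (fun t => -((t - a) * (y - b)) * deriv (fun s => swPotential ω α β s y) t
        + (t - a) ^ 2 * deriv (fun s => swPotential ω α β t s) y)
      =ᶠ[𝓝 x] fun t => -((y - b) * ((t - a) * (-2 * ω * t - 2 * α / t ^ 3)))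
        + (t - a) ^ 2 * (-2 * ω * y - 2 * β / y ^ 3) := by
    filter_upwards [eventually_ne_nhds hx] with t ht
    rw [deriv_swPotential_fst ω α β y ht, deriv_swPotential_snd ω α β t hy]
    ring
  rw [hev.deriv_eq]
  refine HasDerivAt.deriv ?_
  refine ((((hasDerivAt_id x).sub_const a).mul (hasDerivAt_mul_sub_div_cube ω α hx)).const_mul
    _).neg.add ((((hasDerivAt_id x).sub_const a).pow 2).mul_const _) |>.congr_deriv ?_
  simp only [id]
  ring

lemma swPotential_eq_zero_of_bertrandDarboux (hx : x ≠ 0) (hy : y ≠ 0)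
    (h : deriv (fun t => (t - b) ^ 2 * deriv (fun s => swPotential ω α β s t) x
        - (x - a) * (t - b) * deriv (fun s => swPotential ω α β x s) t) y
      = deriv (fun t => -((t - a) * (y - b)) * deriv (fun s => swPotential ω α β s y) t
        + (t - a) ^ 2 * deriv (fun s => swPotential ω α β t s) y) x) :
    ω * (b * x - a * y) + a * (b - y) * α / x ^ 4 + b * (x - a) * β / y ^ 4 = 0 := by
  rw [deriv_bertrandDarboux_fst ω α β a b hx hy, deriv_bertrandDarboux_snd ω α β a b hx hy] at h
  field_simp at h ⊢
  linear_combination h / 6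

end BertrandDarboux

/-- If the Bertrand–Darboux compatibility condition holds for the
Smorodinsky–Winternitz potential and the Killing tensor of polar type centred at
`(a,b)`, on an open set avoiding the coordinate axes, then
`ω²(bx - ay) + a(b - y)α/x⁴ + b(x - a)β/y⁴ = 0` holds identically on that set. -/
theorem sw_bertrand_darboux_shifted_polar (ω α β a b : ℝ)
    (U : Set (ℝ × ℝ)) (hU : IsOpen U)
    (hax : ∀ p ∈ U, p.1 ≠ 0 ∧ p.2 ≠ 0)
    (hBD :
      let V : ℝ → ℝ → ℝ := fun x y => -ω*(x^2 + y^2) + α/x^2 + β/y^2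
      let Vx : ℝ → ℝ → ℝ := fun x y => deriv (fun t => V t y) x
      let Vy : ℝ → ℝ → ℝ := fun x y => deriv (fun t => V x t) y
      ∀ p ∈ U,
        deriv (fun t => (t - b)^2 * Vx p.1 t - (p.1 - a)*(t - b) * Vy p.1 t) p.2
          = deriv (fun t => -((t - a)*(p.2 - b)) * Vx t p.2 + (t - a)^2 * Vy t p.2) p.1) :
    ∀ p ∈ U,
      ω^2*(b*p.1 - a*p.2) + a*(b - p.2)*α/p.1^4 + b*(p.1 - a)*β/p.2^4 = 0 := by
  have hF (q : ℝ × ℝ) (hq : q ∈ U) : ω * (b * q.1 - a * q.2) + a * (b - q.2) * α / q.1 ^ 4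
      + b * (q.1 - a) * β / q.2 ^ 4 = 0 :=
    swPotential_eq_zero_of_bertrandDarboux ω α β a b (hax q hq).1 (hax q hq).2 (hBD q hq)
  intro p hp
  obtain ⟨hslice₁, hslice₂⟩ := eventually_mk_mem_of_mem_nhds (hU.mem_nhds hp)
  have hα : a * (b - p.2) * α = 0 :=
    eq_zero_of_eventually_add_mul_add_div_pow_eq_zero four_ne_zero
      (p := -ω * a * p.2 - a * b * β / p.2 ^ 4) (q := ω * b + b * β / p.2 ^ 4)
      (hslice₁.mono fun t ht => by linear_combination hF _ ht)
  have hβ : b * (p.1 - a) * β = 0 :=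
    eq_zero_of_eventually_add_mul_add_div_pow_eq_zero four_ne_zero
      (p := ω * b * p.1 + a * b * α / p.1 ^ 4) (q := -ω * a - a * α / p.1 ^ 4)
      (hslice₂.mono fun t ht => by linear_combination hF _ ht)
  have hω : ω * (b * p.1 - a * p.2) = 0 := by
    simpa [hα, hβ] using hF p hp
  linear_combination ω * hω + hα / p.1 ^ 4 + hβ / p.2 ^ 4
end
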